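/- Let q = q(n) ∈ (0,1) with q = o(1), let s_a ∈ (0,1] be a constant, let τ > 0 be a constant, and let m = m(n) be a sequence of positive integers with m q s_a² ≥ 2 log n / (τ log(1/q)) for all large n. Set z = (1+τ) m q s_a². If X_n is a Binomial(m, q² s_a²) random variable, then n² · P(X_n > z) → 0 as n → ∞. -/

import Mathlib

/-!
Chernoff's bound `P(X ≥ z) ≤ exp (m p (e^t - 1) - t z)` for `X ∼ Binomial(m, p)`, taken at
`e^t = (1 + τ) / q` (so that `m p e^t = z`), gives
`P(X > z) ≤ exp (-z (log (1 + τ) + log (1 / q) - 1))`. Since `log (1 / q) → ∞`, the exponent is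
eventually at least `(τ + 1/2) m q s_a² log (1 / q) ≥ (2 + 1/τ) log n`, so
`n² P(X > z) ≤ n ^ (-1/τ) → 0`.
-/

open MeasureTheory ProbabilityTheory Filter

noncomputable section

namespace AttrAlign

/-- The law of a `Binomial(m, r)` random variable, as a measure on `ℕ`
(the success probability `r` is clamped to `[0,1]`). -/
def binomMeasure (m : ℕ) (r : ℝ) : Measure ℕ :=
  ((PMF.binomial (min (Real.toNNReal r) 1) (min_le_right _ _) m).map
    (fun k => (k : ℕ))).toMeasure

end AttrAlign

open AttrAlign

open Real
open scoped unitInterval Topology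

namespace ProbabilityTheory

lemma mgf_binomial (n : ℕ) (p : I) (t : ℝ) :
    mgf (fun k : ℕ => (k : ℝ)) (binomial n p) t = (p * exp t + (1 - p)) ^ n := by
  rw [mgf, integral_binomial, add_pow, Nat.range_succ_eq_Iic]
  refine Finset.sum_congr rfl fun k _ => ?_
  rw [smul_eq_mul, mul_pow, ← exp_nat_mul, mul_comm (k : ℝ) t]
  ring

lemma binomial_real_ge_le_exp (n : ℕ) (p : I) (z : ℝ) {t : ℝ} (ht : 0 ≤ t) :
    (binomial n p).real {k | z ≤ (k : ℝ)} ≤ exp (n * p * (exp t - 1) - t * z) := by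
  have hbase : (p : ℝ) * exp t + (1 - p) ≤ exp (p * (exp t - 1)) := by
    linarith [add_one_le_exp (p * (exp t - 1))]
  calc (binomial n p).real {k | z ≤ (k : ℝ)}
      ≤ exp (-t * z) * mgf (fun k : ℕ => (k : ℝ)) (binomial n p) t :=
        measure_ge_le_exp_mul_mgf z ht (integrable_binomial _)
    _ ≤ exp (-t * z) * exp (p * (exp t - 1)) ^ n := by
        have hbase0 : 0 ≤ (p : ℝ) * exp t + (1 - p) :=
          add_nonneg (mul_nonneg (unitInterval.nonneg p) (exp_pos t).le)
            (unitInterval.one_minus_nonneg p)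
        rw [mgf_binomial]
        exact mul_le_mul_of_nonneg_left (pow_le_pow_left₀ hbase0 hbase n) (exp_pos _).le
    _ = exp (n * p * (exp t - 1) - t * z) := by
        rw [← exp_nat_mul, ← exp_add]
        ring_nf

end ProbabilityTheory

lemma tendsto_natCast_sq_mul_of_le_exp {f : ℕ → ℝ} {c : ℝ} (hc : 0 < c) (hf0 : ∀ n, 0 ≤ f n)
    (hf : ∀ᶠ n : ℕ in atTop, f n ≤ exp (-((2 + c) * log n))) :
    Tendsto (fun n : ℕ => (n : ℝ) ^ 2 * f n) atTop (𝓝 0) := by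
  have hdecay : Tendsto (fun n : ℕ => (n : ℝ) ^ (-c)) atTop (𝓝 0) :=
    (tendsto_rpow_neg_atTop hc).comp tendsto_natCast_atTop_atTop
  refine squeeze_zero' (Eventually.of_forall fun n => mul_nonneg (sq_nonneg _) (hf0 n)) ?_ hdecay
  filter_upwards [hf, eventually_gt_atTop 0] with n hfn hn
  have hn' : (0 : ℝ) < n := Nat.cast_pos.2 hn
  calc (n : ℝ) ^ 2 * f n ≤ exp (log n * 2) * exp (-((2 + c) * log n)) := by
        rw [← rpow_def_of_pos hn', rpow_two]
        exact mul_le_mul_of_nonneg_left hfn (sq_nonneg _)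
    _ = (n : ℝ) ^ (-c) := by
        rw [← exp_add, rpow_def_of_pos hn']
        ring_nf

namespace AttrAlign

set_option linter.deprecated false in
lemma binomMeasure_eq_binomial (m : ℕ) {p : ℝ} (hp : p ∈ I) :
    binomMeasure m p = binomial m ⟨p, hp⟩ := by
  have hclamp : min p.toNNReal 1 = p.toNNReal := min_eq_left (Real.toNNReal_le_one.2 hp.2)
  have hval : binomMeasure m p
      = (PMF.map Fin.val (PMF.binomial (min p.toNNReal 1) (min_le_right _ _) m)).toMeasure := by
    rw [binomMeasure, show (fun k : ℕ => k) = id from rfl, PMF.map_id]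
    rfl
  refine Measure.ext_of_singleton fun k => ?_
  rw [binomial_singleton, hval, PMF.toMeasure_apply_singleton _ _ (measurableSet_singleton _),
    PMF.map_apply, tsum_fintype]
  rcases le_or_gt k m with hk | hk
  · rw [Finset.sum_eq_single_of_mem (⟨k, Nat.lt_succ_of_le hk⟩ : Fin (m + 1)) (Finset.mem_univ _),
      if_pos rfl, PMF.binomial_apply, hclamp, Fin.val_last,
      ENNReal.ofReal_mul (mul_nonneg (Nat.cast_nonneg _) (pow_nonneg hp.1 _)),
      ENNReal.ofReal_mul (Nat.cast_nonneg _), ENNReal.ofReal_pow hp.1,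
      ENNReal.ofReal_pow (sub_nonneg.2 hp.2), ENNReal.ofReal_sub _ hp.1, ENNReal.ofReal_one,
      ENNReal.ofReal_natCast]
    · rw [mul_comm, ← mul_assoc]
      rfl
    · intro j _ hj
      exact if_neg fun h => hj (Fin.ext h.symm)
  · rw [Nat.choose_eq_zero_of_lt hk, Nat.cast_zero, zero_mul, zero_mul, ENNReal.ofReal_zero]
    exact Finset.sum_eq_zero fun j _ => if_neg (by omega)

lemma binomMeasure_gt_le_exp (m : ℕ) {q s τ : ℝ} (hq0 : 0 < q) (hq1 : q ≤ 1) (hs : s ^ 2 ≤ 1)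
    (hτ : 0 ≤ τ) :
    (binomMeasure m (q ^ 2 * s ^ 2) {k | (1 + τ) * (m * q * s ^ 2) < (k : ℝ)}).toReal
      ≤ exp (-((1 + τ) * (m * q * s ^ 2) * (log (1 + τ) + log (1 / q) - 1))) := by
  have hp : q ^ 2 * s ^ 2 ∈ I :=
    ⟨by positivity, mul_le_one₀ (pow_le_one₀ hq0.le hq1) (sq_nonneg s) hs⟩
  have hlam : 1 ≤ (1 + τ) / q := by rw [le_div_iff₀ hq0]; linarith
  have hloglam : log ((1 + τ) / q) = log (1 + τ) + log (1 / q) := by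
    rw [div_eq_mul_one_div, log_mul (by positivity) (by positivity)]
  have htilt : (m : ℝ) * (q ^ 2 * s ^ 2) * ((1 + τ) / q) = (1 + τ) * (m * q * s ^ 2) := by
    field_simp
  set z := (1 + τ) * (m * q * s ^ 2)
  rw [binomMeasure_eq_binomial m hp, ← measureReal_def]
  calc (binomial m ⟨_, hp⟩).real {k | z < (k : ℝ)}
      ≤ (binomial m ⟨_, hp⟩).real {k | z ≤ (k : ℝ)} :=
        measureReal_mono fun k (hk : z < k) => hk.le
    _ ≤ exp (m * (q ^ 2 * s ^ 2) * (exp (log ((1 + τ) / q)) - 1) - log ((1 + τ) / q) * z) :=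
        binomial_real_ge_le_exp m _ z (log_nonneg hlam)
    _ ≤ exp (-(z * (log (1 + τ) + log (1 / q) - 1))) := by
        rw [exp_log (by positivity), hloglam, mul_sub, mul_one, htilt]
        gcongr
        linarith [show (0 : ℝ) ≤ m * (q ^ 2 * s ^ 2) by positivity]

/-- Here `c`, `L` and `ℓ` stand for `log (1 + τ)`, `log (1 / q)` and `log n`. -/
lemma mul_log_le_tail_exponent {τ μ L ℓ c : ℝ} (hτ : 0 < τ) (hL : 0 < L) (hℓ : 0 ≤ ℓ)
    (hμ : 2 * ℓ / (τ * L) ≤ μ) (hc : 2 * (1 + τ) * (1 - c) ≤ L) :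
    (2 + 1 / τ) * ℓ ≤ (1 + τ) * μ * (c + L - 1) := by
  rw [div_le_iff₀ (by positivity)] at hμ
  have hμ0 : 0 ≤ μ := nonneg_of_mul_nonneg_left (by linarith) (mul_pos hτ hL)
  have hexp : (τ + 1 / 2) * L ≤ (1 + τ) * (c + L - 1) := by linarith
  calc (2 + 1 / τ) * ℓ = (τ + 1 / 2) * (2 * ℓ) / τ := by field_simp
    _ ≤ (τ + 1 / 2) * (μ * (τ * L)) / τ := by gcongr
    _ = μ * ((τ + 1 / 2) * L) := by field_simp
    _ ≤ μ * ((1 + τ) * (c + L - 1)) := by gcongr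
    _ = (1 + τ) * μ * (c + L - 1) := by ring

end AttrAlign

theorem binomial_upper_tail_attrSparse_general
    (q : ℕ → ℝ) (m : ℕ → ℕ) (sa τ : ℝ)
    (hq01 : ∀ n, 0 < q n ∧ q n < 1)
    (hq : Tendsto q atTop (nhds 0))
    (hsa : 0 < sa) (hsa1 : sa ≤ 1)
    (hτ : 0 < τ)
    (hmean : ∀ᶠ n : ℕ in atTop,
      2 * Real.log n / (τ * Real.log (1 / q n)) ≤ (m n : ℝ) * q n * sa ^ 2) :
    Tendsto (fun n : ℕ => (n : ℝ) ^ 2 *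
        (binomMeasure (m n) ((q n) ^ 2 * sa ^ 2)
          {k : ℕ | (1 + τ) * ((m n : ℝ) * q n * sa ^ 2) < (k : ℝ)}).toReal)
      atTop (nhds 0) := by
  have hlog : Tendsto (fun n => log (1 / q n)) atTop atTop := by
    have hq' : Tendsto q atTop (𝓝[>] 0) :=
      tendsto_nhdsWithin_of_tendsto_nhds_of_eventually_within _ hq
        (Eventually.of_forall fun n => (hq01 n).1)
    simpa only [one_div, Function.comp_def, Pi.inv_apply] using
      tendsto_log_atTop.comp hq'.inv_tendsto_nhdsGT_zero
  refine tendsto_natCast_sq_mul_of_le_exp (one_div_pos.2 hτ) (fun _ => ENNReal.toReal_nonneg) ?_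
  filter_upwards [hmean, hlog.eventually_ge_atTop (2 * (1 + τ) * (1 - log (1 + τ)))]
    with n hmn hlogn
  obtain ⟨hq0, hq1⟩ := hq01 n
  refine (binomMeasure_gt_le_exp (m n) hq0 hq1.le (pow_le_one₀ hsa.le hsa1) hτ.le).trans ?_
  exact exp_le_exp.2 <| neg_le_neg <| mul_log_le_tail_exponent hτ
    (log_pos (one_lt_one_div hq0 hq1)) (log_natCast_nonneg n) hmn hlogn

/-- Upper tail bound for Step 1 of Algorithm `AttrSparse`: with `z = (1+τ) m q s_a²`
and `X_n ∼ Binomial(m, q² s_a²)`, if `q = o(1)` and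
`m q s_a² ≥ 2 log n / (τ log(1/q))` for all large `n`, then `n² P(X_n > z) → 0`. -/
theorem binomial_upper_tail_attrSparse
    (q : ℕ → ℝ) (m : ℕ → ℕ) (sa τ : ℝ)
    (hq01 : ∀ n, 0 < q n ∧ q n < 1)
    (hq : Tendsto q atTop (nhds 0))
    (hsa : 0 < sa) (hsa1 : sa ≤ 1)
    (hm : ∀ n, 0 < m n)
    (hτ : 0 < τ)
    (hmean : ∀ᶠ n : ℕ in atTop,
      2 * Real.log n / (τ * Real.log (1 / q n)) ≤ (m n : ℝ) * q n * sa ^ 2) :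
    Tendsto (fun n : ℕ => (n : ℝ) ^ 2 *
        (binomMeasure (m n) ((q n) ^ 2 * sa ^ 2)
          {k : ℕ | (1 + τ) * ((m n : ℝ) * q n * sa ^ 2) < (k : ℝ)}).toReal)
      atTop (nhds 0) :=
  binomial_upper_tail_attrSparse_general q m sa τ hq01 hq hsa hsa1 hτ hmean
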